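/- The spatial gradients of a rotating wave profile are rotated by the linearization: let f : ℝ^N → ℝ^N be continuously differentiable, let d₁,…,d_N > 0, let ω ∈ ℝ, and let u* : ℝ² → ℝ^N be three times continuously differentiable and satisfy D Δu*(y) + ω (∂_ψ u*)(y) + f(u*(y)) = 0 for all y ∈ ℝ². Then for all y ∈ ℝ²: D Δ(∂₁u*)(y) + ω ∂_ψ(∂₁u*)(y) + f'(u*(y)) (∂₁u*)(y) = −ω (∂₂u*)(y), and D Δ(∂₂u*)(y) + ω ∂_ψ(∂₂u*)(y) + f'(u*(y)) (∂₂u*)(y) = ω (∂₁u*)(y). -/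

import Mathlib

open Real

/-- The partial derivative `∂ᵢ u` in the `i`-th coordinate direction. -/
noncomputable def pd {N : ℕ} (i : Fin 2)
    (u : EuclideanSpace ℝ (Fin 2) → EuclideanSpace ℝ (Fin N))
    (y : EuclideanSpace ℝ (Fin 2)) : EuclideanSpace ℝ (Fin N) :=
  fderiv ℝ u y (EuclideanSpace.single i 1)

/-- The componentwise Laplacian `Δu = ∂₁₁u + ∂₂₂u`. -/
noncomputable def lapOp {N : ℕ} (u : EuclideanSpace ℝ (Fin 2) → EuclideanSpace ℝ (Fin N))
    (y : EuclideanSpace ℝ (Fin 2)) : EuclideanSpace ℝ (Fin N) :=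
  pd 0 (pd 0 u) y + pd 1 (pd 1 u) y

/-- The rotational derivative `(∂_ψ u)(y) = y₁ ∂₂u(y) − y₂ ∂₁u(y)`. -/
noncomputable def rotDeriv {N : ℕ}
    (u : EuclideanSpace ℝ (Fin 2) → EuclideanSpace ℝ (Fin N))
    (y : EuclideanSpace ℝ (Fin 2)) : EuclideanSpace ℝ (Fin N) :=
  y 0 • pd 1 u y - y 1 • pd 0 u y

/-- The action of the diagonal matrix `D = diag(d₁, …, d_N)`. -/
noncomputable def dmul {N : ℕ} (d : Fin N → ℝ) (v : EuclideanSpace ℝ (Fin N)) :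
    EuclideanSpace ℝ (Fin N) :=
  (WithLp.equiv 2 (Fin N → ℝ)).symm (fun i => d i * v i)

/-!
Differentiating the profile equation `D Δu + ω ∂_ψ u + f(u) = 0` in the direction `yᵢ` gives
`L*(∂ᵢu) + ω [∂ᵢ, ∂_ψ] u = 0`. The derivatives `∂ᵢ` commute with `D`, with `Δ` (symmetry of
second derivatives) and with `f ∘ u` up to the chain rule, so everything is carried by the
commutator with the rotation: `[∂₁, ∂_ψ] = ∂₂` and `[∂₂, ∂_ψ] = -∂₁`.
-/

section

variable {N M : ℕ} {i j : Fin 2} {y : EuclideanSpace ℝ (Fin 2)}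
  {v w : EuclideanSpace ℝ (Fin 2) → EuclideanSpace ℝ (Fin N)}

noncomputable def dmulCLM (d : Fin N → ℝ) :
    EuclideanSpace ℝ (Fin N) →L[ℝ] EuclideanSpace ℝ (Fin N) :=
  LinearMap.toContinuousLinearMap
    { toFun := dmul d
      map_add' := fun a b => by ext; simp [dmul, mul_add]
      map_smul' := fun c a => by ext; simp [dmul]; ring }

/-- The left-hand side `D Δu + ω ∂_ψ u + f(u)` of the profile equation. -/
noncomputable def waveOp (d : Fin N → ℝ) (ω : ℝ)
    (f : EuclideanSpace ℝ (Fin N) → EuclideanSpace ℝ (Fin N))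
    (u : EuclideanSpace ℝ (Fin 2) → EuclideanSpace ℝ (Fin N)) (y : EuclideanSpace ℝ (Fin 2)) :
    EuclideanSpace ℝ (Fin N) :=
  dmul d (lapOp u y) + ω • rotDeriv u y + f (u y)

/-- The linearization `L* v = D Δv + ω ∂_ψ v + f'(u*) v` about `u`. -/
noncomputable def linOp (d : Fin N → ℝ) (ω : ℝ)
    (f : EuclideanSpace ℝ (Fin N) → EuclideanSpace ℝ (Fin N))
    (u v : EuclideanSpace ℝ (Fin 2) → EuclideanSpace ℝ (Fin N)) (y : EuclideanSpace ℝ (Fin 2)) :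
    EuclideanSpace ℝ (Fin N) :=
  dmul d (lapOp v y) + ω • rotDeriv v y + fderiv ℝ f (u y) (v y)

lemma HasFDerivAt.pd_eq {w' : EuclideanSpace ℝ (Fin 2) →L[ℝ] EuclideanSpace ℝ (Fin N)}
    (h : HasFDerivAt w w' y) (i : Fin 2) : pd i w y = w' (EuclideanSpace.single i 1) := by
  rw [pd, h.fderiv]

lemma pd_const (c : EuclideanSpace ℝ (Fin N)) : pd i (fun _ => c) y = 0 := by
  simp [pd]

lemma pd_add (hv : DifferentiableAt ℝ v y) (hw : DifferentiableAt ℝ w y) :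
    pd i (fun z => v z + w z) y = pd i v y + pd i w y :=
  (hv.hasFDerivAt.add hw.hasFDerivAt).pd_eq i

lemma pd_sub (hv : DifferentiableAt ℝ v y) (hw : DifferentiableAt ℝ w y) :
    pd i (fun z => v z - w z) y = pd i v y - pd i w y :=
  (hv.hasFDerivAt.sub hw.hasFDerivAt).pd_eq i

lemma pd_const_smul (c : ℝ) (hw : DifferentiableAt ℝ w y) :
    pd i (fun z => c • w z) y = c • pd i w y :=
  (hw.hasFDerivAt.const_smul c).pd_eq i

lemma pd_coord_smul (hw : DifferentiableAt ℝ w y) :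
    pd i (fun z => z j • w z) y =
      (EuclideanSpace.single i 1 : EuclideanSpace ℝ (Fin 2)) j • w y + y j • pd i w y := by
  have hj : HasFDerivAt (fun z : EuclideanSpace ℝ (Fin 2) => z j)
      (EuclideanSpace.proj j : EuclideanSpace ℝ (Fin 2) →L[ℝ] ℝ) y :=
    (EuclideanSpace.proj (𝕜 := ℝ) (ι := Fin 2) j).hasFDerivAt
  rw [(hj.fun_smul hw.hasFDerivAt).pd_eq i]
  simp [pd, add_comm]

lemma pd_comp {g : EuclideanSpace ℝ (Fin M) → EuclideanSpace ℝ (Fin N)}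
    {w : EuclideanSpace ℝ (Fin 2) → EuclideanSpace ℝ (Fin M)}
    (hg : DifferentiableAt ℝ g (w y)) (hw : DifferentiableAt ℝ w y) :
    pd i (fun z => g (w z)) y = fderiv ℝ g (w y) (pd i w y) :=
  (hg.hasFDerivAt.comp y hw.hasFDerivAt).pd_eq i

lemma pd_dmul (d : Fin N → ℝ) (hw : DifferentiableAt ℝ w y) :
    pd i (fun z => dmul d (w z)) y = dmul d (pd i w y) :=
  ((dmulCLM d).hasFDerivAt.comp y hw.hasFDerivAt).pd_eq i

lemma contDiff_pd {n : WithTop ℕ∞} (i : Fin 2) (hw : ContDiff ℝ (n + 1) w) :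
    ContDiff ℝ n (pd i w) :=
  (ContinuousLinearMap.apply ℝ (EuclideanSpace ℝ (Fin N))
    (EuclideanSpace.single i (1 : ℝ))).contDiff.comp (hw.fderiv_right le_rfl)

lemma contDiff_lapOp {n : WithTop ℕ∞} (hw : ContDiff ℝ (n + 2) w) : ContDiff ℝ n (lapOp w) := by
  have hpdpd : ∀ j, ContDiff ℝ n (pd j (pd j w)) := fun j =>
    contDiff_pd j (contDiff_pd j (by rwa [add_assoc, one_add_one_eq_two]))
  exact (hpdpd 0).add (hpdpd 1)

lemma contDiff_rotDeriv {n : WithTop ℕ∞} (hw : ContDiff ℝ (n + 1) w) :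
    ContDiff ℝ n (rotDeriv w) :=
  ((EuclideanSpace.proj 0).contDiff.smul (contDiff_pd 1 hw)).sub
    ((EuclideanSpace.proj 1).contDiff.smul (contDiff_pd 0 hw))

lemma pd_pd_eq_fderiv_fderiv (hw : DifferentiableAt ℝ (fderiv ℝ w) y) :
    pd i (pd j w) y =
      fderiv ℝ (fderiv ℝ w) y (EuclideanSpace.single i 1) (EuclideanSpace.single j 1) :=
  ((ContinuousLinearMap.apply ℝ (EuclideanSpace ℝ (Fin N))
    (EuclideanSpace.single j (1 : ℝ))).hasFDerivAt.comp y hw.hasFDerivAt).pd_eq i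

lemma pd_comm (hw : ContDiff ℝ 2 w) (y : EuclideanSpace ℝ (Fin 2)) :
    pd i (pd j w) y = pd j (pd i w) y := by
  have hw' : DifferentiableAt ℝ (fderiv ℝ w) y :=
    (hw.fderiv_right (m := 1) le_rfl).differentiable one_ne_zero y
  rw [pd_pd_eq_fderiv_fderiv hw', pd_pd_eq_fderiv_fderiv hw']
  exact hw.contDiffAt.isSymmSndFDerivAt (by simp) _ _

lemma pd_lapOp (hw : ContDiff ℝ 3 w) : pd i (lapOp w) y = lapOp (pd i w) y := by
  have hw2 : ContDiff ℝ 2 w := hw.of_le (by norm_num)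
  have hpd : ∀ j, ContDiff ℝ 2 (pd j w) := fun j => contDiff_pd j hw
  have hpdpd : ∀ j, Differentiable ℝ (pd j (pd j w)) := fun j =>
    (contDiff_pd (n := 1) j (hpd j)).differentiable one_ne_zero
  have hswap : ∀ j, pd i (pd j (pd j w)) y = pd j (pd j (pd i w)) y := fun j => by
    rw [pd_comm (hpd j) y, funext (pd_comm (i := i) (j := j) hw2)]
  change pd i (fun z => pd 0 (pd 0 w) z + pd 1 (pd 1 w) z) y = _
  simp only [lapOp, pd_add (hpdpd 0 y) (hpdpd 1 y), hswap]

lemma pd_rotDeriv (hw : ContDiff ℝ 2 w) :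
    pd i (rotDeriv w) y = rotDeriv (pd i w) y +
      ((EuclideanSpace.single i 1 : EuclideanSpace ℝ (Fin 2)) 0 • pd 1 w y -
        (EuclideanSpace.single i 1 : EuclideanSpace ℝ (Fin 2)) 1 • pd 0 w y) := by
  have hpd : ∀ j, Differentiable ℝ (pd j w) := fun j =>
    (contDiff_pd (n := 1) j hw).differentiable one_ne_zero
  have hsmul : ∀ j k : Fin 2, DifferentiableAt ℝ (fun z => z j • pd k w z) y := fun j k =>
    ((EuclideanSpace.proj j).differentiableAt).smul (hpd k y)
  change pd i (fun z => z 0 • pd 1 w z - z 1 • pd 0 w z) y = _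
  simp only [rotDeriv, pd_sub (hsmul 0 1) (hsmul 1 0), pd_coord_smul (hpd _ y), pd_comm hw]
  abel

lemma pd_waveOp {d : Fin N → ℝ} {ω : ℝ}
    {f : EuclideanSpace ℝ (Fin N) → EuclideanSpace ℝ (Fin N)} {u : EuclideanSpace ℝ (Fin 2) → EuclideanSpace ℝ (Fin N)}
    (hf : Differentiable ℝ f) (hu : ContDiff ℝ 3 u) :
    pd i (waveOp d ω f u) y = linOp d ω f u (pd i u) y +
      ω • ((EuclideanSpace.single i 1 : EuclideanSpace ℝ (Fin 2)) 0 • pd 1 u y -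
        (EuclideanSpace.single i 1 : EuclideanSpace ℝ (Fin 2)) 1 • pd 0 u y) := by
  have hlap : Differentiable ℝ (lapOp u) :=
    (contDiff_lapOp (n := 1) hu).differentiable one_ne_zero
  have hrot : Differentiable ℝ (rotDeriv u) :=
    (contDiff_rotDeriv (n := 1) (hu.of_le (by norm_num))).differentiable one_ne_zero
  have hu1 : Differentiable ℝ u := hu.differentiable (by norm_num)
  have hD : DifferentiableAt ℝ (fun z => dmul d (lapOp u z)) y :=
    (dmulCLM d).differentiableAt.comp y (hlap y)
  have hR : DifferentiableAt ℝ (fun z => ω • rotDeriv u z) y := (hrot y).const_smul ω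
  have hDR : DifferentiableAt ℝ (fun z => dmul d (lapOp u z) + ω • rotDeriv u z) y := hD.add hR
  have hfu : DifferentiableAt ℝ (fun z => f (u z)) y := (hf _).comp y (hu1 y)
  change pd i (fun z => dmul d (lapOp u z) + ω • rotDeriv u z + f (u z)) y = _
  rw [pd_add hDR hfu, pd_add hD hR, pd_dmul d (hlap y),
    pd_const_smul ω (hrot y), pd_comp (hf _) (hu1 y), pd_lapOp hu,
    pd_rotDeriv (hu.of_le (by norm_num)), linOp]
  module

end

theorem spatial_gradients_rotated_by_linearization_general (N : ℕ)
    (f : EuclideanSpace ℝ (Fin N) → EuclideanSpace ℝ (Fin N)) (hf : ContDiff ℝ 1 f)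
    (d : Fin N → ℝ) (ω : ℝ)
    (u : EuclideanSpace ℝ (Fin 2) → EuclideanSpace ℝ (Fin N)) (hu : ContDiff ℝ 3 u)
    (hwave : ∀ y : EuclideanSpace ℝ (Fin 2),
      dmul d (lapOp u y) + ω • rotDeriv u y + f (u y) = 0) :
    ∀ y : EuclideanSpace ℝ (Fin 2),
      (dmul d (lapOp (pd 0 u) y) + ω • rotDeriv (pd 0 u) y +
          fderiv ℝ f (u y) (pd 0 u y) = -(ω • pd 1 u y)) ∧
      (dmul d (lapOp (pd 1 u) y) + ω • rotDeriv (pd 1 u) y +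
          fderiv ℝ f (u y) (pd 1 u y) = ω • pd 0 u y) := by
  intro y
  have hF : waveOp d ω f u = fun _ => 0 := funext hwave
  have h0 : pd 0 (waveOp d ω f u) y = 0 := by rw [hF, pd_const]
  have h1 : pd 1 (waveOp d ω f u) y = 0 := by rw [hF, pd_const]
  rw [pd_waveOp (hf.differentiable one_ne_zero) hu] at h0 h1
  simp only [Fin.isValue, PiLp.single_eq_same, PiLp.single_eq_of_ne, one_ne_zero, zero_ne_one,
    ne_eq, not_false_eq_true, one_smul, zero_smul, sub_zero, zero_sub, smul_neg] at h0 h1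
  exact ⟨eq_neg_of_add_eq_zero_left h0, add_neg_eq_zero.mp h1⟩

/-- The spatial gradients of a rotating wave profile are rotated by the
linearization: if `D Δu* + ω ∂_ψ u* + f(u*) = 0`, then
`L*(∂₁u*) = −ω ∂₂u*` and `L*(∂₂u*) = ω ∂₁u*`, where `L* v = D Δv + ω ∂_ψ v + f'(u*) v`. -/
theorem spatial_gradients_rotated_by_linearization (N : ℕ)
    (f : EuclideanSpace ℝ (Fin N) → EuclideanSpace ℝ (Fin N)) (hf : ContDiff ℝ 1 f)
    (d : Fin N → ℝ) (hd : ∀ i, 0 < d i) (ω : ℝ)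
    (u : EuclideanSpace ℝ (Fin 2) → EuclideanSpace ℝ (Fin N)) (hu : ContDiff ℝ 3 u)
    (hwave : ∀ y : EuclideanSpace ℝ (Fin 2),
      dmul d (lapOp u y) + ω • rotDeriv u y + f (u y) = 0) :
    ∀ y : EuclideanSpace ℝ (Fin 2),
      (dmul d (lapOp (pd 0 u) y) + ω • rotDeriv (pd 0 u) y +
          fderiv ℝ f (u y) (pd 0 u y) = -(ω • pd 1 u y)) ∧
      (dmul d (lapOp (pd 1 u) y) + ω • rotDeriv (pd 1 u) y +
          fderiv ℝ f (u y) (pd 1 u y) = ω • pd 0 u y) :=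
  spatial_gradients_rotated_by_linearization_general N f hf d ω u hu hwave
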